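/- In the octahedral lattice G_OCT = { x·(2,0,0) + y·(0,2,0) + z·(1,1,√2) : x,y,z ∈ ℤ }, every point has exactly 12 points of the lattice at Euclidean distance exactly 2 from it. -/

import Mathlib

/-- The octahedral lattice. -/
def octLattice : Set (EuclideanSpace ℝ (Fin 3)) :=
  {p | ∃ x y z : ℤ, p = x • (!₂[2, 0, 0] : EuclideanSpace ℝ (Fin 3)) +
      y • (!₂[0, 2, 0] : EuclideanSpace ℝ (Fin 3)) +
      z • (!₂[1, 1, Real.sqrt 2] : EuclideanSpace ℝ (Fin 3))}

noncomputable def octF (t : ℤ × ℤ × ℤ) : EuclideanSpace ℝ (Fin 3) :=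
  t.1 • (!₂[2, 0, 0] : EuclideanSpace ℝ (Fin 3)) +
    t.2.1 • (!₂[0, 2, 0] : EuclideanSpace ℝ (Fin 3)) +
    t.2.2 • (!₂[1, 1, Real.sqrt 2] : EuclideanSpace ℝ (Fin 3))

lemma octF_apply (t : ℤ × ℤ × ℤ) :
    octF t 0 = 2 * t.1 + t.2.2 ∧ octF t 1 = 2 * t.2.1 + t.2.2 ∧
      octF t 2 = t.2.2 * Real.sqrt 2 := by
  refine ⟨?_, ?_, ?_⟩ <;>
    simp [octF, PiLp.add_apply, PiLp.smul_apply, Matrix.cons_val_zero, Matrix.cons_val_one,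
      Matrix.head_cons, zsmul_eq_mul] <;> ring

lemma octF_add (s t : ℤ × ℤ × ℤ) : octF (s + t) = octF s + octF t := by
  simp only [octF, Prod.fst_add, Prod.snd_add, add_zsmul]; abel

lemma octF_inj : Function.Injective octF := by
  rintro ⟨a, b, c⟩ ⟨a', b', c'⟩ h
  have ha := octF_apply (a, b, c); have hb := octF_apply (a', b', c')
  have h0 := congrArg (· 0) h
  have h1 := congrArg (· 1) h
  have h2 := congrArg (· 2) h
  rw [ha.1, hb.1] at h0
  rw [ha.2.1, hb.2.1] at h1
  rw [ha.2.2, hb.2.2] at h2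
  have hc' : c = c' := by field_simp at h2; exact_mod_cast h2
  have h0' : 2 * a + c = 2 * a' + c' := by simp only at h0; exact_mod_cast h0
  have h1' : 2 * b + c = 2 * b' + c' := by simp only at h1; exact_mod_cast h1
  simp only [Prod.mk.injEq]
  omega

lemma norm_octF (t : ℤ × ℤ × ℤ) :
    ‖octF t‖ = Real.sqrt (((2 * t.1 + t.2.2)^2 + (2 * t.2.1 + t.2.2)^2 + 2 * t.2.2^2 : ℤ)) := by
  rw [EuclideanSpace.norm_eq]
  congr 1
  have h := octF_apply t
  rw [Fin.sum_univ_three, h.1, h.2.1, h.2.2]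
  have : (Real.sqrt 2)^2 = 2 := Real.sq_sqrt (by norm_num)
  push_cast
  simp [Real.norm_eq_abs, sq_abs, mul_pow, this]
  ring

def octT : Finset (ℤ × ℤ × ℤ) :=
  {(1,0,0), (-1,0,0), (0,1,0), (0,-1,0),
   (0,0,1), (-1,0,1), (0,-1,1), (-1,-1,1),
   (0,0,-1), (1,0,-1), (0,1,-1), (1,1,-1)}

lemma octT_card : octT.card = 12 := by decide

lemma int_sol (a b c : ℤ) :
    (2*a+c)^2 + (2*b+c)^2 + 2*c^2 = 4 ↔ (a, b, c) ∈ octT := by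
  constructor
  · intro h
    have hc : -1 ≤ c ∧ c ≤ 1 := by
      constructor <;> nlinarith [sq_nonneg (2*a+c), sq_nonneg (2*b+c), sq_nonneg (c-1), sq_nonneg (c+1)]
    have ha : -1 ≤ a ∧ a ≤ 1 := by
      constructor <;> nlinarith [sq_nonneg (2*b+c), sq_nonneg (2*a+c-2), sq_nonneg (2*a+c+2)]
    have hb : -1 ≤ b ∧ b ≤ 1 := by
      constructor <;> nlinarith [sq_nonneg (2*a+c), sq_nonneg (2*b+c-2), sq_nonneg (2*b+c+2)]
    obtain ⟨hc1, hc2⟩ := hc; obtain ⟨ha1, ha2⟩ := ha; obtain ⟨hb1, hb2⟩ := hb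
    interval_cases a <;> interval_cases b <;> interval_cases c <;> revert h <;> decide
  · intro h
    fin_cases h <;> decide

lemma octF_sub (s t : ℤ × ℤ × ℤ) : octF (s - t) = octF s - octF t := by
  have := octF_add (s - t) t
  simp only [sub_add_cancel] at this
  rw [this]; abel

lemma norm_octF_eq_two_iff (t : ℤ × ℤ × ℤ) : ‖octF t‖ = 2 ↔ t ∈ octT := by
  obtain ⟨a, b, c⟩ := t
  rw [norm_octF, ← int_sol a b c]
  set N : ℤ := (2*a+c)^2 + (2*b+c)^2 + 2*c^2 with hN
  have hN0 : (0:ℝ) ≤ (N : ℝ) := by positivity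
  constructor
  · intro h
    have h4 : (N : ℝ) = 4 := by
      have := Real.sq_sqrt hN0
      rw [h] at this; linarith
    exact_mod_cast h4
  · intro h
    have h4 : (N : ℝ) = 4 := by exact_mod_cast congrArg (Int.cast : ℤ → ℝ) h
    rw [h4, show (4:ℝ) = 2^2 by norm_num, Real.sqrt_sq (by norm_num)]

lemma mem_octLattice_iff (p : EuclideanSpace ℝ (Fin 3)) :
    p ∈ octLattice ↔ ∃ t, p = octF t := by
  constructor
  · rintro ⟨x, y, z, rfl⟩; exact ⟨(x, y, z), rfl⟩
  · rintro ⟨⟨x, y, z⟩, rfl⟩; exact ⟨x, y, z, rfl⟩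

theorem octLattice_twelve_neighbours :
    ∀ p ∈ octLattice, {q | q ∈ octLattice ∧ dist p q = 2}.ncard = 12 := by
  intro p hp
  obtain ⟨s, rfl⟩ := (mem_octLattice_iff p).1 hp
  have hset : {q | q ∈ octLattice ∧ dist (octF s) q = 2} =
      (fun t => octF s + octF t) '' (octT : Set (ℤ × ℤ × ℤ)) := by
    ext q
    simp only [Set.mem_setOf_eq, Set.mem_image, Finset.mem_coe]
    constructor
    · rintro ⟨hq, hd⟩
      obtain ⟨t, rfl⟩ := (mem_octLattice_iff q).1 hq
      refine ⟨t - s, ?_, ?_⟩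
      · rw [← norm_octF_eq_two_iff, octF_sub, ← norm_sub_rev, ← dist_eq_norm]
        exact hd
      · rw [← octF_add, show s + (t - s) = t by abel]
    · rintro ⟨d, hd, rfl⟩
      refine ⟨?_, ?_⟩
      · rw [mem_octLattice_iff]; exact ⟨s + d, (octF_add s d).symm ▸ rfl⟩
      · rw [dist_eq_norm_sub', add_sub_cancel_left]
        exact (norm_octF_eq_two_iff d).2 hd
  rw [hset, Set.ncard_image_of_injective _ (fun t t' h => octF_inj (by simpa using h)),
    Set.ncard_coe_finset, octT_card]
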